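/- If σ satisfies the braid relations on V⊗V⊗V, then the 'symmetrization-style' product ⊙ defined on tensor powers by ω ⊙ η = [i+j choose j, σ](ω⊗η) for ω ∈ V^⊗i, η ∈ V^⊗j is associative: (ω⊙η)⊙ρ = ω⊙(η⊙ρ) for ω ∈ V^⊗i, η ∈ V^⊗j, ρ ∈ V^⊗k. -/
import Mathlib


/-- Abstract model of the tower of tensor powers `V^⊗n` of an `A`-bimodule `V`
(tensor products over `A`), equipped with maps `sig n i` modelling the braiding
`σ` acting in tensor positions `i+1, i+2` (1-indexed), and operators
`padL`/`padR` modelling `id ⊗ f` and `f ⊗ id`.  The structure fields record the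
evident compatibilities that hold in the genuine tensor-power model. -/
structure BraidTower where
  T : ℕ → Type*
  acg : ∀ n, AddCommGroup (T n)
  sig : (n : ℕ) → ℕ → (T n →+ T n)
  padL : ∀ {m m' : ℕ}, (T m →+ T m') → (T (m + 1) →+ T (m' + 1))
  padR : ∀ {m m' : ℕ}, (T m →+ T m') → (T (m + 1) →+ T (m' + 1))
  padL_id : ∀ n, padL (AddMonoidHom.id (T n)) = AddMonoidHom.id (T (n + 1))
  padR_id : ∀ n, padR (AddMonoidHom.id (T n)) = AddMonoidHom.id (T (n + 1))
  padL_comp : ∀ {a b c : ℕ} (f : T a →+ T b) (g : T b →+ T c),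
    padL (g.comp f) = (padL g).comp (padL f)
  padR_comp : ∀ {a b c : ℕ} (f : T a →+ T b) (g : T b →+ T c),
    padR (g.comp f) = (padR g).comp (padR f)
  padL_add : ∀ {a b : ℕ} (f g : T a →+ T b), padL (f + g) = padL f + padL g
  padR_add : ∀ {a b : ℕ} (f g : T a →+ T b), padR (f + g) = padR f + padR g
  padLR : ∀ {a b : ℕ} (f : T a →+ T b), padL (padR f) = padR (padL f)
  padL_sig : ∀ n i, padL (sig n i) = sig (n + 1) (i + 1)
  padR_sig : ∀ n i, padR (sig n i) = sig (n + 1) i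
  sig_comm : ∀ n i j, i + 1 < j →
    (sig n i).comp (sig n j) = (sig n j).comp (sig n i)

attribute [instance] BraidTower.acg

namespace BraidTower

variable (D : BraidTower)

/-- The braid (Yang–Baxter) relations for `σ`. -/
def Braided : Prop :=
  ∀ n i, (D.sig n i).comp ((D.sig n (i + 1)).comp (D.sig n i))
    = (D.sig n (i + 1)).comp ((D.sig n i).comp (D.sig n (i + 1)))

/-- Transport an element along an equality of degrees. -/
def castT {n n' : ℕ} (h : n = n') (x : D.T n) : D.T n' := h ▸ x

/-- Transport a morphism along equalities of degrees. -/
def castHom {a b a' b' : ℕ} (h1 : a = a') (h2 : b = b')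
    (f : D.T a →+ D.T b) : D.T a' →+ D.T b' := by
  subst h1; subst h2; exact f

/-- Transport an endomorphism along an equality of degrees. -/
def castEndo {n n' : ℕ} (h : n = n') (f : D.T n →+ D.T n) :
    D.T n' →+ D.T n' := by subst h; exact f

/-- `σ₁ σ₂ ⋯ σ_m` (composition, with `σ_m` applied first). -/
def chain (n : ℕ) : ℕ → (D.T n →+ D.T n)
  | 0 => AddMonoidHom.id _
  | m + 1 => (chain n m).comp (D.sig n m)

/-- The braided binomial `[n choose k, σ]`, defined by the recursion
`[n choose k, σ] = (id ⊗ [n-1 choose k-1, σ]) σ₁⋯σ_{n-k} + (id ⊗ [n-1 choose k, σ])`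
with `[n choose 0, σ] = [n choose n, σ] = id`. -/
def binom : (n : ℕ) → ℕ → (D.T n →+ D.T n)
  | _, 0 => AddMonoidHom.id _
  | 0, _ + 1 => AddMonoidHom.id _
  | n + 1, k + 1 =>
    if k = n then AddMonoidHom.id _
    else ((D.padL (binom n k)).comp (chain D (n + 1) (n - k))) + D.padL (binom n (k + 1))

/-- `id^{⊗j} ⊗ f` (pad on the left `j` times). -/
def padLs {a b : ℕ} (f : D.T a →+ D.T b) : (j : ℕ) → (D.T (a + j) →+ D.T (b + j))
  | 0 => f
  | j + 1 => D.padL (padLs f j)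

/-- `f ⊗ id^{⊗j}` (pad on the right `j` times). -/
def padRs {a b : ℕ} (f : D.T a →+ D.T b) : (j : ℕ) → (D.T (a + j) →+ D.T (b + j))
  | 0 => f
  | j + 1 => D.padR (padRs f j)

/-- The braided factorial `[n,σ]! = [n,σ] ∘ ([n-1,σ]! ⊗ id)`, where
`[n,σ] = [n choose 1, σ]` is the braided integer. -/
def bfact : (n : ℕ) → (D.T n →+ D.T n)
  | 0 => AddMonoidHom.id _
  | n + 1 => (binom D (n + 1) 1).comp (D.padR (bfact n))

end BraidTower
namespace BraidTower

variable (D : BraidTower)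

section Cast

@[simp] lemma ce_rfl {n : ℕ} (h : n = n) (f : D.T n →+ D.T n) :
    D.castEndo h f = f := rfl

lemma ce_comp {a b : ℕ} (h : a = b) (f g : D.T a →+ D.T a) :
    D.castEndo h (f.comp g) = (D.castEndo h f).comp (D.castEndo h g) := by
  subst h; rfl

lemma ce_add {a b : ℕ} (h : a = b) (f g : D.T a →+ D.T a) :
    D.castEndo h (f + g) = D.castEndo h f + D.castEndo h g := by
  subst h; rfl

lemma ce_id {a b : ℕ} (h : a = b) :
    D.castEndo h (AddMonoidHom.id (D.T a)) = AddMonoidHom.id (D.T b) := by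
  subst h; rfl

lemma ce_ce {a b c : ℕ} (h : a = b) (h' : b = c) (f : D.T a →+ D.T a) :
    D.castEndo h' (D.castEndo h f) = D.castEndo (h.trans h') f := by
  subst h; subst h'; rfl

lemma ce_sig {a b : ℕ} (h : a = b) (u : ℕ) :
    D.castEndo h (D.sig a u) = D.sig b u := by subst h; rfl

lemma ce_binom {a b : ℕ} (h : a = b) (q : ℕ) :
    D.castEndo h (D.binom a q) = D.binom b q := by subst h; rfl

lemma ce_padL {a b : ℕ} (h : a = b) (f : D.T a →+ D.T a) :
    D.padL (D.castEndo h f) = D.castEndo (by rw [h]) (D.padL f) := by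
  subst h; rfl

lemma ce_padR {a b : ℕ} (h : a = b) (f : D.T a →+ D.T a) :
    D.padR (D.castEndo h f) = D.castEndo (by rw [h]) (D.padR f) := by
  subst h; rfl

lemma ce_cancel {a b : ℕ} (h : a = b) (f g : D.T a →+ D.T a) :
    D.castEndo h f = D.castEndo h g ↔ f = g := by subst h; rfl

lemma castT_app {a b : ℕ} (h : a = b) (F : D.T a →+ D.T a) (w : D.T a) :
    D.castT h (F w) = D.castEndo h F (D.castT h w) := by subst h; rfl

end Cast

section Pads

lemma padLs_id (a : ℕ) : ∀ s, D.padLs (AddMonoidHom.id (D.T a)) s = AddMonoidHom.id _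
  | 0 => rfl
  | s + 1 => by rw [padLs, padLs_id a s]; exact D.padL_id _

lemma padRs_id (a : ℕ) : ∀ s, D.padRs (AddMonoidHom.id (D.T a)) s = AddMonoidHom.id _
  | 0 => rfl
  | s + 1 => by rw [padRs, padRs_id a s]; exact D.padR_id _

lemma padLs_comp {a : ℕ} (f g : D.T a →+ D.T a) :
    ∀ s, D.padLs (f.comp g) s = (D.padLs f s).comp (D.padLs g s)
  | 0 => rfl
  | s + 1 => by rw [padLs, padLs_comp f g s, D.padL_comp, padLs, padLs]

lemma padRs_comp {a : ℕ} (f g : D.T a →+ D.T a) :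
    ∀ s, D.padRs (f.comp g) s = (D.padRs f s).comp (D.padRs g s)
  | 0 => rfl
  | s + 1 => by rw [padRs, padRs_comp f g s, D.padR_comp, padRs, padRs]

lemma padLs_add {a : ℕ} (f g : D.T a →+ D.T a) :
    ∀ s, D.padLs (f + g) s = D.padLs f s + D.padLs g s
  | 0 => rfl
  | s + 1 => by rw [padLs, padLs_add f g s, D.padL_add, padLs, padLs]

lemma padRs_add {a : ℕ} (f g : D.T a →+ D.T a) :
    ∀ s, D.padRs (f + g) s = D.padRs f s + D.padRs g s
  | 0 => rfl
  | s + 1 => by rw [padRs, padRs_add f g s, D.padR_add, padRs, padRs]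

lemma padLs_sig (m u : ℕ) : ∀ s, D.padLs (D.sig m u) s = D.sig (m + s) (u + s)
  | 0 => rfl
  | s + 1 => by rw [padLs, padLs_sig m u s]; exact D.padL_sig _ _

lemma padRs_sig (m u : ℕ) : ∀ s, D.padRs (D.sig m u) s = D.sig (m + s) u
  | 0 => rfl
  | s + 1 => by rw [padRs, padRs_sig m u s]; exact D.padR_sig _ _

lemma padRs_padL {a : ℕ} (f : D.T a →+ D.T a) :
    ∀ s, D.padRs (D.padL f) s
      = D.castEndo (by omega) (D.padL (D.padRs f s))
  | 0 => rfl
  | s + 1 => by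
    rw [padRs, padRs_padL f s, ce_padR, ← D.padLR]; rfl

lemma padLs_padL {a : ℕ} (f : D.T a →+ D.T a) :
    ∀ s, D.padLs (D.padL f) s
      = D.castEndo (by omega) (D.padL (D.padLs f s))
  | 0 => rfl
  | s + 1 => by
    rw [padLs, padLs_padL f s, ce_padL]; rfl

end Pads

end BraidTower
namespace BraidTower

variable (D : BraidTower)

/-- `σ_a σ_{a+1} ⋯ σ_{a+m-1}` (composition, rightmost applied first). -/
def chainF (n a : ℕ) : ℕ → (D.T n →+ D.T n)
  | 0 => AddMonoidHom.id _
  | m + 1 => (chainF n a m).comp (D.sig n (a + m))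

lemma chain_eq (n : ℕ) : ∀ m, D.chain n m = D.chainF n 0 m
  | 0 => rfl
  | m + 1 => by rw [chain, chain_eq n m, chainF, Nat.zero_add]

lemma ce_chainF {x y : ℕ} (h : x = y) (a m : ℕ) :
    D.castEndo h (D.chainF x a m) = D.chainF y a m := by subst h; rfl

lemma padL_chainF (n a : ℕ) : ∀ m, D.padL (D.chainF n a m) = D.chainF (n + 1) (a + 1) m
  | 0 => D.padL_id n
  | m + 1 => by
    rw [chainF, D.padL_comp, padL_chainF n a m, D.padL_sig, chainF]
    congr 2
    omega

lemma padR_chainF (n a : ℕ) : ∀ m, D.padR (D.chainF n a m) = D.chainF (n + 1) a m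
  | 0 => D.padR_id n
  | m + 1 => by
    rw [chainF, D.padR_comp, padR_chainF n a m, D.padR_sig, chainF]

lemma padLs_chainF (n a m : ℕ) : ∀ s, D.padLs (D.chainF n a m) s = D.chainF (n + s) (a + s) m
  | 0 => rfl
  | s + 1 => by rw [padLs, padLs_chainF n a m s]; exact D.padL_chainF _ _ _

lemma padRs_chainF (n a m : ℕ) : ∀ s, D.padRs (D.chainF n a m) s = D.chainF (n + s) a m
  | 0 => rfl
  | s + 1 => by rw [padRs, padRs_chainF n a m s]; exact D.padR_chainF _ _ _

lemma chainF_append (n a b : ℕ) :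
    ∀ c, (D.chainF n a b).comp (D.chainF n (a + b) c) = D.chainF n a (b + c)
  | 0 => by rw [chainF]; exact AddMonoidHom.comp_id _
  | c + 1 => by
    rw [chainF, show b + (c+1) = (b+c) + 1 from rfl, chainF,
      ← AddMonoidHom.comp_assoc, chainF_append n a b c]
    congr 2
    omega

/-- sigs supported in positions `≥ lo` (and in range). -/
inductive Gen (n lo : ℕ) : (D.T n →+ D.T n) → Prop
  | id : Gen n lo (AddMonoidHom.id _)
  | sig : ∀ u, lo ≤ u → u + 2 ≤ n → Gen n lo (D.sig n u)
  | comp : ∀ {f g}, Gen n lo f → Gen n lo g → Gen n lo (f.comp g)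
  | add : ∀ {f g}, Gen n lo f → Gen n lo g → Gen n lo (f + g)

lemma Gen.mono {n lo lo' : ℕ} {f} (h : lo' ≤ lo) (hf : D.Gen n lo f) : D.Gen n lo' f := by
  induction hf with
  | id => exact .id
  | sig u h1 h2 => exact .sig u (le_trans h h1) h2
  | comp _ _ ih1 ih2 => exact .comp ih1 ih2
  | add _ _ ih1 ih2 => exact .add ih1 ih2

lemma Gen.padL {n lo : ℕ} {f} (hf : D.Gen n lo f) : D.Gen (n + 1) (lo + 1) (D.padL f) := by
  induction hf with
  | id => rw [D.padL_id]; exact .id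
  | sig u h1 h2 => rw [D.padL_sig]; exact .sig (u+1) (by omega) (by omega)
  | comp _ _ ih1 ih2 => rw [D.padL_comp]; exact .comp ih1 ih2
  | add _ _ ih1 ih2 => rw [D.padL_add]; exact .add ih1 ih2

lemma Gen.padR {n lo : ℕ} {f} (hf : D.Gen n lo f) : D.Gen (n + 1) lo (D.padR f) := by
  induction hf with
  | id => rw [D.padR_id]; exact .id
  | sig u h1 h2 => rw [D.padR_sig]; exact .sig u h1 (by omega)
  | comp _ _ ih1 ih2 => rw [D.padR_comp]; exact .comp ih1 ih2
  | add _ _ ih1 ih2 => rw [D.padR_add]; exact .add ih1 ih2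

lemma Gen.padLs {n lo : ℕ} {f} (hf : D.Gen n lo f) :
    ∀ s, D.Gen (n + s) (lo + s) (D.padLs f s)
  | 0 => hf
  | s + 1 => (hf.padLs s).padL

lemma Gen.cast {x y lo : ℕ} {f} (h : x = y) (hf : D.Gen x lo f) :
    D.Gen y lo (D.castEndo h f) := by subst h; exact hf

lemma chainF_gen (n a : ℕ) : ∀ b, a + b + 1 ≤ n → D.Gen n a (D.chainF n a b)
  | 0, _ => .id
  | b + 1, h => by
    rw [chainF]
    exact .comp (chainF_gen n a b (by omega)) (.sig (a+b) (by omega) (by omega))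

lemma binom_zero (n : ℕ) : D.binom n 0 = AddMonoidHom.id _ := by
  cases n <;> rfl

lemma binom_self : ∀ n, D.binom n n = AddMonoidHom.id _
  | 0 => rfl
  | n + 1 => by rw [binom]; exact if_pos rfl

lemma binom_succ_succ (n k : ℕ) (h : k < n) :
    D.binom (n + 1) (k + 1)
      = ((D.padL (D.binom n k)).comp (D.chainF (n + 1) 0 (n - k)))
        + D.padL (D.binom n (k + 1)) := by
  rw [binom, if_neg (by omega), chain_eq]

lemma binom_gen : ∀ n q, D.Gen n 0 (D.binom n q)
  | n, 0 => by rw [binom_zero]; exact .id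
  | 0, q + 1 => .id
  | n + 1, q + 1 => by
    by_cases h : q = n
    · subst h; rw [binom_self]; exact .id
    · rcases Nat.lt_or_ge q n with h' | h'
      · rw [binom_succ_succ D n q h']
        exact .add (.comp (Gen.mono D (by omega) (Gen.padL D (binom_gen n q)))
            (D.chainF_gen _ 0 _ (by omega)))
          (Gen.mono D (by omega) (Gen.padL D (binom_gen n (q+1))))
      · rw [binom, if_neg h]
        have h0 : n - q = 0 := by omega
        rw [h0, chain_eq, chainF]
        exact .add (.comp (Gen.mono D (by omega) (Gen.padL D (binom_gen n q))) .id)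
          (Gen.mono D (by omega) (Gen.padL D (binom_gen n (q+1))))

end BraidTower
namespace BraidTower

variable (D : BraidTower)

lemma comm_low_high {n s : ℕ} {f} (hf : D.Gen n s f) (t : ℕ) (ht : t + 2 ≤ s) :
    (D.sig n t).comp f = f.comp (D.sig n t) := by
  induction hf with
  | id => rw [AddMonoidHom.id_comp, AddMonoidHom.comp_id]
  | sig u h1 h2 => exact D.sig_comm n t u (by omega)
  | @comp f g _ _ ih1 ih2 =>
    rw [← AddMonoidHom.comp_assoc, ih1, AddMonoidHom.comp_assoc, ih2,
      AddMonoidHom.comp_assoc]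
  | @add f g _ _ ih1 ih2 =>
    rw [AddMonoidHom.comp_add, AddMonoidHom.add_comp, ih1, ih2]

lemma chainF_comp_sig_high (n a t : ℕ) :
    ∀ b, a + b < t → (D.chainF n a b).comp (D.sig n t) = (D.sig n t).comp (D.chainF n a b)
  | 0, _ => by rw [chainF, AddMonoidHom.id_comp, AddMonoidHom.comp_id]
  | b + 1, h => by
    rw [chainF, AddMonoidHom.comp_assoc, D.sig_comm n (a+b) t (by omega),
      ← AddMonoidHom.comp_assoc, chainF_comp_sig_high n a t b (by omega),
      AddMonoidHom.comp_assoc]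

lemma gen_comm_chainF {n s : ℕ} {f} (hf : D.Gen n s f) (a : ℕ) :
    ∀ b, a + b < s → (D.chainF n a b).comp f = f.comp (D.chainF n a b)
  | 0, _ => by rw [chainF, AddMonoidHom.id_comp, AddMonoidHom.comp_id]
  | b + 1, h => by
    rw [chainF, AddMonoidHom.comp_assoc, D.comm_low_high hf (a+b) (by omega),
      ← AddMonoidHom.comp_assoc, gen_comm_chainF hf a b (by omega),
      AddMonoidHom.comp_assoc]

lemma chain_sig (hbraid : D.Braided) (n u : ℕ) :
    ∀ m, u + 2 ≤ m →
      (D.chainF n 0 m).comp (D.sig n u) = (D.sig n (u + 1)).comp (D.chainF n 0 m) := by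
  intro m hm
  induction m, hm using Nat.le_induction with
  | base =>
    show ((D.chainF n 0 (u+1)).comp (D.sig n (0 + (u+1)))).comp (D.sig n u) = _
    rw [chainF, Nat.zero_add, Nat.zero_add, AddMonoidHom.comp_assoc,
      AddMonoidHom.comp_assoc, hbraid n u, ← AddMonoidHom.comp_assoc,
      ← AddMonoidHom.comp_assoc,
      D.chainF_comp_sig_high n 0 (u+1) u (by omega)]
    show _ = ((D.sig n (u+1)).comp ((D.chainF n 0 (u+1)).comp (D.sig n (0+(u+1)))))
    rw [chainF, Nat.zero_add, Nat.zero_add, AddMonoidHom.comp_assoc,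
      AddMonoidHom.comp_assoc, AddMonoidHom.comp_assoc]
  | succ m hm ih =>
    rw [chainF, Nat.zero_add, AddMonoidHom.comp_assoc,
      ← D.sig_comm n u m (by omega), ← AddMonoidHom.comp_assoc, ih,
      AddMonoidHom.comp_assoc]

end BraidTower
namespace BraidTower

variable (D : BraidTower)

def padN {m n : ℕ} (h : m + 1 = n) (f : D.T m →+ D.T m) : D.T n →+ D.T n :=
  D.castEndo h (D.padL f)

lemma padN_comp {m n : ℕ} (h : m + 1 = n) (f g : D.T m →+ D.T m) :
    D.padN h (f.comp g) = (D.padN h f).comp (D.padN h g) := by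
  subst h; simp only [padN, ce_rfl, D.padL_comp]

lemma padN_add {m n : ℕ} (h : m + 1 = n) (f g : D.T m →+ D.T m) :
    D.padN h (f + g) = D.padN h f + D.padN h g := by
  subst h; simp only [padN, ce_rfl, D.padL_add]

lemma padN_cast {m m' n : ℕ} (h : m + 1 = n) (h' : m' + 1 = n) (e : m = m')
    (f : D.T m →+ D.T m) : D.padN h f = D.padN h' (D.castEndo e f) := by
  subst e; subst h; rfl

lemma padN_chainF {m n : ℕ} (h : m + 1 = n) (x b : ℕ) :
    D.padN h (D.chainF m x b) = D.chainF n (x + 1) b := by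
  subst h; simp only [padN, ce_rfl]; exact D.padL_chainF m x b

lemma padRs_padN {m n : ℕ} (h : m + 1 = n) (s : ℕ) (h' : m + s + 1 = n + s)
    (f : D.T m →+ D.T m) :
    D.padRs (D.padN h f) s = D.padN h' (D.padRs f s) := by
  subst h; simp only [padN, ce_rfl]; exact D.padRs_padL f s

lemma padLs_padN {m n : ℕ} (h : m + 1 = n) (s : ℕ) (h' : m + s + 1 = n + s)
    (f : D.T m →+ D.T m) :
    D.padLs (D.padN h f) s = D.padN h' (D.padLs f s) := by
  subst h; simp only [padN, ce_rfl]; exact D.padLs_padL f s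

lemma ce_padN {m n n' : ℕ} (h : m + 1 = n) (hc : n = n') (h'' : m + 1 = n')
    (f : D.T m →+ D.T m) :
    D.castEndo hc (D.padN h f) = D.padN h'' f := by
  subst hc; rw [ce_rfl]

lemma binom_padLs_congr {x y n : ℕ} (hxy : x = y) (q s : ℕ) (h : x + s = n) (h' : y + s = n) :
    D.castEndo h (D.padLs (D.binom x q) s) = D.castEndo h' (D.padLs (D.binom y q) s) := by
  subst hxy; rfl

lemma binom_padRs_congr {x y n : ℕ} (hxy : x = y) (q s : ℕ) (h : x + s = n) (h' : y + s = n) :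
    D.castEndo h (D.padRs (D.binom x q) s) = D.castEndo h' (D.padRs (D.binom y q) s) := by
  subst hxy; rfl

lemma chain_conj (hbraid : D.Braided) {m : ℕ} {g : D.T m →+ D.T m}
    (hg : D.Gen m 0 g) (k' : ℕ) :
    (D.chainF (m + (k' + 1)) 0 m).comp (D.padRs g (k' + 1))
      = (D.padL (D.padRs g k')).comp (D.chainF (m + (k' + 1)) 0 m) := by
  induction hg with
  | id =>
    rw [D.padRs_id, D.padRs_id]
    rw [D.padL_id]
    exact (AddMonoidHom.comp_id _).trans (AddMonoidHom.id_comp _).symm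
  | sig u h1 h2 =>
    rw [D.padRs_sig, D.padRs_sig, D.padL_sig]
    exact D.chain_sig hbraid (m + (k' + 1)) u m h2
  | @comp f g _ _ ihf ihg =>
    rw [D.padRs_comp, D.padRs_comp, D.padL_comp, ← AddMonoidHom.comp_assoc, ihf,
      AddMonoidHom.comp_assoc, ihg, ← AddMonoidHom.comp_assoc]
  | @add f g _ _ ihf ihg =>
    rw [D.padRs_add, D.padRs_add, D.padL_add, AddMonoidHom.comp_add,
      AddMonoidHom.add_comp, ihf, ihg]


lemma key (hbraid : D.Braided) :
    ∀ n i j k (hn : i + j + k = n) (hjk : j + k + i = n),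
      (D.binom n k).comp (D.castEndo hn (D.padRs (D.binom (i + j) j) k))
        = (D.binom n (j + k)).comp (D.castEndo hjk (D.padLs (D.binom (j + k) k) i)) := by
  intro n
  induction n using Nat.strong_induction_on with
  | _ n IH =>
  intro i j k hn hjk
  subst hn
  by_cases hk0 : k = 0
  · subst hk0
    -- k = 0
    rw [D.binom_zero, AddMonoidHom.id_comp, ce_rfl, D.binom_zero (j+0), D.padLs_id, ce_id,
      AddMonoidHom.comp_id]
    rfl
  · obtain ⟨c, rfl⟩ : ∃ c, k = c + 1 := ⟨k - 1, by omega⟩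
    by_cases hj0 : j = 0
    · subst hj0
      -- j = 0
      have e1 : D.binom (i+0) 0 = AddMonoidHom.id _ := D.binom_zero _
      have e2 : D.binom (0+(c+1)) (c+1) = AddMonoidHom.id _ := by
        rw [show (0+(c+1) : ℕ) = c+1 by omega]; exact D.binom_self _
      rw [e1, D.padRs_id, ce_id, AddMonoidHom.comp_id, e2, D.padLs_id, ce_id,
        AddMonoidHom.comp_id]
      rw [show (0+(c+1) : ℕ) = c+1 by omega]
    · obtain ⟨b, rfl⟩ : ∃ b, j = b + 1 := ⟨j - 1, by omega⟩
      by_cases hi0 : i = 0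
      · subst hi0
        -- i = 0
        have e1 : D.binom (0+(b+1)) (b+1) = AddMonoidHom.id _ := by
          rw [show (0+(b+1) : ℕ) = b+1 by omega]; exact D.binom_self _
        have e2 : D.castEndo hjk (D.padLs (D.binom ((b+1)+(c+1)) (c+1)) 0)
            = D.binom (0+(b+1)+(c+1)) (c+1) := D.ce_binom hjk (c+1)
        have e3 : D.binom (0+(b+1)+(c+1)) ((b+1)+(c+1)) = AddMonoidHom.id _ := by
          rw [show (0+(b+1)+(c+1) : ℕ) = (b+1)+(c+1) by omega]; exact D.binom_self _
        rw [e1, D.padRs_id, ce_id, AddMonoidHom.comp_id, e2, e3, AddMonoidHom.id_comp]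
      · obtain ⟨a, rfl⟩ : ∃ a, i = a + 1 := ⟨i - 1, by omega⟩
        -- main case
        simp only [ce_rfl]
        have pfN : (a+1+(b+1)+c)+1 = (a+1+(b+1)+(c+1)) := rfl
        have pfIJ : (a+1+b)+1 = (a+1+(b+1)) := rfl
        have pfJK : (b+1+c)+1 = (b+1+(c+1)) := rfl
        have pfh : (a+1+b)+(c+1)+1 = (a+1+(b+1))+(c+1) := by omega
        have pfq : (b+1+c)+(a+1)+1 = (b+1+(c+1))+(a+1) := by omega
        have pfq2 : (b+1+c)+(a+1)+1 = (a+1+(b+1)+(c+1)) := by omega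
        have pfr : (b+1+c)+a+1 = (b+1+(c+1))+a := by omega
        have pfr2 : (b+1+c)+a+1 = (a+1+(b+1)+c) := by omega
        have h3 : (b+1+c) + (a+1) = (a+1+(b+1)+c) := by omega
        have h4 : (a+1+b) + (c+1) = (a+1+(b+1)+c) := by omega
        have h4' : (a+(b+1)) + (c+1) = (a+1+(b+1)+c) := by omega
        have hX3 : (b+1)+(c+1)+a = (a+1+(b+1)+c) := by omega
        have eIJ : D.binom (a+1+(b+1)) (b+1)
            = (D.padN pfIJ (D.binom (a+1+b) b)).comp (D.chainF (a+1+(b+1)) 0 (a+1))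
              + D.padN pfIJ (D.binom (a+1+b) (b+1)) := by
          have h := D.binom_succ_succ (a+1+b) b (by omega)
          rw [show (a+1+b) - b = a+1 by omega] at h
          exact h
        have eN : D.binom (a+1+(b+1)+(c+1)) (c+1)
            = (D.padN pfN (D.binom (a+1+(b+1)+c) c)).comp (D.chainF (a+1+(b+1)+(c+1)) 0 (a+1+(b+1)))
              + D.padN pfN (D.binom (a+1+(b+1)+c) (c+1)) := by
          have h := D.binom_succ_succ (a+1+(b+1)+c) c (by omega)
          rw [show ((a+1+(b+1)+c) : ℕ) - c = (a+1+(b+1)) by omega] at h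
          exact h
        have eNR : D.binom (a+1+(b+1)+(c+1)) (b+1+(c+1))
            = (D.padN pfN (D.binom (a+1+(b+1)+c) (b+1+c))).comp (D.chainF (a+1+(b+1)+(c+1)) 0 (a+1))
              + D.padN pfN (D.binom (a+1+(b+1)+c) (b+1+(c+1))) := by
          have h := D.binom_succ_succ (a+1+(b+1)+c) (b+1+c) (by omega)
          rw [show ((a+1+(b+1)+c) : ℕ) - (b+1+c) = a+1 by omega] at h
          exact h
        have eJK : D.binom (b+1+(c+1)) (c+1)
            = (D.padN pfJK (D.binom (b+1+c) c)).comp (D.chainF (b+1+(c+1)) 0 (b+1))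
              + D.padN pfJK (D.binom (b+1+c) (c+1)) := by
          have h := D.binom_succ_succ (b+1+c) c (by omega)
          rw [show ((b+1+c) : ℕ) - c = b+1 by omega] at h
          exact h
        have gG1 : D.Gen (a+1+(b+1)+(c+1)) ((a+1)+1)
            (D.padN pfN (D.castEndo h3 (D.padLs (D.binom (b+1+c) c) (a+1)))) :=
          Gen.cast D pfN (Gen.padL D (Gen.mono D (by omega)
            (Gen.cast D h3 (Gen.padLs D (D.binom_gen (b+1+c) c) (a+1)))))
        have gG2 : D.Gen (a+1+(b+1)+(c+1)) ((a+1)+1)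
            (D.padN pfN (D.castEndo h3 (D.padLs (D.binom (b+1+c) (c+1)) (a+1)))) :=
          Gen.cast D pfN (Gen.padL D (Gen.mono D (by omega)
            (Gen.cast D h3 (Gen.padLs D (D.binom_gen (b+1+c) (c+1)) (a+1)))))
        have C1 := D.gen_comm_chainF gG1 0 (a+1) (by omega)
        have C2 := D.gen_comm_chainF gG2 0 (a+1) (by omega)
        have cc : (D.chainF (a+1+(b+1)+(c+1)) 0 (a+1)).comp (D.chainF (a+1+(b+1)+(c+1)) (a+1) (b+1))
            = D.chainF (a+1+(b+1)+(c+1)) 0 (a+1+(b+1)) := by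
          have h := D.chainF_append (a+1+(b+1)+(c+1)) 0 (a+1) (b+1)
          rwa [Nat.zero_add] at h
        have IH1 : (D.binom (a+1+(b+1)+c) c).comp (D.padRs (D.binom (a+1+(b+1)) (b+1)) c)
            = (D.binom (a+1+(b+1)+c) (b+1+c)).comp (D.castEndo h3 (D.padLs (D.binom (b+1+c) c) (a+1))) := by
          have h := IH (a+1+(b+1)+c) (by omega) (a+1) (b+1) c rfl h3
          rwa [ce_rfl] at h
        have IH2 : (D.binom (a+1+(b+1)+c) (c+1)).comp (D.castEndo h4 (D.padRs (D.binom (a+1+b) b) (c+1)))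
            = (D.binom (a+1+(b+1)+c) (b+1+c)).comp (D.castEndo h3 (D.padLs (D.binom (b+1+c) (c+1)) (a+1))) := by
          have hX : b+(c+1)+(a+1) = (a+1+(b+1)+c) := by omega
          have h := IH (a+1+(b+1)+c) (by omega) (a+1) b (c+1) h4 hX
          have e1 : D.binom (a+1+(b+1)+c) (b+(c+1)) = D.binom (a+1+(b+1)+c) (b+1+c) := by
            rw [show b+(c+1) = b+1+c by omega]
          have e2 : D.castEndo hX (D.padLs (D.binom (b+(c+1)) (c+1)) (a+1))
              = D.castEndo h3 (D.padLs (D.binom (b+1+c) (c+1)) (a+1)) :=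
            D.binom_padLs_congr (by omega) _ _ hX h3
          rw [e1, e2] at h
          exact h
        have IH3 : (D.binom (a+1+(b+1)+c) (c+1)).comp (D.castEndo h4 (D.padRs (D.binom (a+1+b) (b+1)) (c+1)))
            = (D.binom (a+1+(b+1)+c) (b+1+(c+1))).comp (D.castEndo hX3 (D.padLs (D.binom (b+1+(c+1)) (c+1)) a)) := by
          rw [D.binom_padRs_congr (show ((a+1+b):ℕ) = a+(b+1) by omega) (b+1) (c+1) h4 h4']
          exact IH (a+1+(b+1)+c) (by omega) a (b+1) (c+1) h4' hX3
        have EPR : D.padRs (D.binom (a+1+(b+1)) (b+1)) (c+1)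
            = (D.padN pfN (D.castEndo h4 (D.padRs (D.binom (a+1+b) b) (c+1)))).comp
                (D.chainF (a+1+(b+1)+(c+1)) 0 (a+1))
              + D.padN pfN (D.castEndo h4 (D.padRs (D.binom (a+1+b) (b+1)) (c+1))) := by
          rw [eIJ, D.padRs_add, D.padRs_comp, D.padRs_chainF,
            D.padRs_padN pfIJ (c+1) pfh, D.padRs_padN pfIJ (c+1) pfh,
            D.padN_cast pfh pfN h4, D.padN_cast pfh pfN h4]
        have EPL : D.castEndo hjk (D.padLs (D.binom (b+1+(c+1)) (c+1)) (a+1))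
            = (D.padN pfN (D.castEndo h3 (D.padLs (D.binom (b+1+c) c) (a+1)))).comp
                (D.chainF (a+1+(b+1)+(c+1)) (a+1) (b+1))
              + D.padN pfN (D.castEndo h3 (D.padLs (D.binom (b+1+c) (c+1)) (a+1))) := by
          rw [eJK, D.padLs_add, D.padLs_comp, D.padLs_chainF,
            D.padLs_padN pfJK (a+1) pfq, D.padLs_padN pfJK (a+1) pfq,
            D.ce_add, D.ce_comp, D.ce_padN pfq hjk pfq2, D.ce_padN pfq hjk pfq2,
            D.ce_chainF, Nat.zero_add,
            D.padN_cast pfq2 pfN h3, D.padN_cast pfq2 pfN h3]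
        have EPLa : D.castEndo hX3 (D.padLs (D.binom (b+1+(c+1)) (c+1)) a)
            = (D.castEndo h3 (D.padLs (D.binom (b+1+c) c) (a+1))).comp (D.chainF (a+1+(b+1)+c) a (b+1))
              + D.castEndo h3 (D.padLs (D.binom (b+1+c) (c+1)) (a+1)) := by
          rw [eJK, D.padLs_add, D.padLs_comp, D.padLs_chainF,
            D.padLs_padN pfJK a pfr, D.padLs_padN pfJK a pfr,
            D.ce_add, D.ce_comp, D.ce_padN pfr hX3 pfr2, D.ce_padN pfr hX3 pfr2,
            D.ce_chainF, Nat.zero_add]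
          rfl
        have M1 : (D.padN pfN ((D.binom (a+1+(b+1)+c) (b+1+c)).comp
              (D.castEndo h3 (D.padLs (D.binom (b+1+c) c) (a+1))))).comp (D.chainF (a+1+(b+1)+(c+1)) 0 (a+1+(b+1)))
            = ((D.padN pfN (D.binom (a+1+(b+1)+c) (b+1+c))).comp (D.chainF (a+1+(b+1)+(c+1)) 0 (a+1))).comp
                ((D.padN pfN (D.castEndo h3 (D.padLs (D.binom (b+1+c) c) (a+1)))).comp
                  (D.chainF (a+1+(b+1)+(c+1)) (a+1) (b+1))) := by
          rw [D.padN_comp, ← cc]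
          simp only [← AddMonoidHom.comp_assoc]
          congr 1
          rw [AddMonoidHom.comp_assoc, AddMonoidHom.comp_assoc, C1]
        have M3 : (D.padN pfN (D.binom (a+1+(b+1)+c) (c+1))).comp
              ((D.padN pfN (D.castEndo h4 (D.padRs (D.binom (a+1+b) b) (c+1)))).comp
                (D.chainF (a+1+(b+1)+(c+1)) 0 (a+1)))
            = ((D.padN pfN (D.binom (a+1+(b+1)+c) (b+1+c))).comp (D.chainF (a+1+(b+1)+(c+1)) 0 (a+1))).comp
                (D.padN pfN (D.castEndo h3 (D.padLs (D.binom (b+1+c) (c+1)) (a+1)))) := by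
          rw [← AddMonoidHom.comp_assoc, ← D.padN_comp, IH2, D.padN_comp,
            AddMonoidHom.comp_assoc, ← C2, ← AddMonoidHom.comp_assoc]
        have M4 : (D.padN pfN (D.binom (a+1+(b+1)+c) (c+1))).comp
              (D.padN pfN (D.castEndo h4 (D.padRs (D.binom (a+1+b) (b+1)) (c+1))))
            = (D.padN pfN (D.binom (a+1+(b+1)+c) (b+1+(c+1)))).comp
                ((D.padN pfN (D.castEndo h3 (D.padLs (D.binom (b+1+c) c) (a+1)))).comp
                  (D.chainF (a+1+(b+1)+(c+1)) (a+1) (b+1)))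
              + (D.padN pfN (D.binom (a+1+(b+1)+c) (b+1+(c+1)))).comp
                  (D.padN pfN (D.castEndo h3 (D.padLs (D.binom (b+1+c) (c+1)) (a+1)))) := by
          rw [← D.padN_comp, IH3, EPLa, AddMonoidHom.comp_add, D.padN_add, D.padN_comp,
            D.padN_comp, D.padN_comp, D.padN_chainF]
        rw [eN, AddMonoidHom.add_comp, AddMonoidHom.comp_assoc,
          D.chain_conj hbraid (D.binom_gen (a+1+(b+1)) (b+1)) c,
          show D.padL (D.padRs (D.binom (a+1+(b+1)) (b+1)) c)
            = D.padN pfN (D.padRs (D.binom (a+1+(b+1)) (b+1)) c) from rfl,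
          ← AddMonoidHom.comp_assoc, ← D.padN_comp, IH1, EPR, AddMonoidHom.comp_add,
          eNR, EPL, AddMonoidHom.add_comp, AddMonoidHom.comp_add, AddMonoidHom.comp_add]
        refine (congrArg₂ (· + ·) M1 (congrArg₂ (· + ·) M3 M4)).trans ?_
        abel

end BraidTower
namespace BraidTower

variable (D : BraidTower)

lemma castT_binom_app {m n : ℕ} (h : m = n) (q : ℕ) (F : D.T m →+ D.T m) (w : D.T m) :
    D.castT h (D.binom m q (F w)) = D.binom n q (D.castEndo h F (D.castT h w)) := by
  subst h; rfl

end BraidTower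


open BraidTower in
/-- **Associativity of the braided shuffle product.**
Suppose `σ` satisfies the braid relations, and let `mul` be the tensor product
pairing `V^⊗i × V^⊗j → V^⊗(i+j)` (bi-additive, associative, and compatible with
the padding operators, as it is in the genuine tensor-power model).  Then the
product `ω ⊙ η = [i+j choose j, σ] (ω ⊗ η)` is associative:
`(ω ⊙ η) ⊙ ρ = ω ⊙ (η ⊙ ρ)` for `ω ∈ V^⊗i`, `η ∈ V^⊗j`, `ρ ∈ V^⊗k`. -/
theorem braided_shuffle_assoc (D : BraidTower) (hbraid : D.Braided)
    (mul : ∀ {i j : ℕ}, D.T i → D.T j → D.T (i + j))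
    (hmul_addL : ∀ {i j : ℕ} (x y : D.T i) (z : D.T j),
      mul (x + y) z = mul x z + mul y z)
    (hmul_addR : ∀ {i j : ℕ} (x : D.T i) (y z : D.T j),
      mul x (y + z) = mul x y + mul x z)
    (hmul_assoc : ∀ {i j k : ℕ} (x : D.T i) (y : D.T j) (z : D.T k),
      mul (mul x y) z
        = castT D (show i + (j + k) = (i + j) + k by omega) (mul x (mul y z)))
    (hpadR_mul : ∀ {i j : ℕ} (f : D.T i →+ D.T i) (x : D.T i) (y : D.T j),
      padRs D f j (mul x y) = mul (f x) y)
    (hpadL_mul : ∀ {i j : ℕ} (g : D.T j →+ D.T j) (x : D.T i) (y : D.T j),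
      castEndo D (show j + i = i + j by omega) (padLs D g i) (mul x y)
        = mul x (g y))
    (i j k : ℕ) (x : D.T i) (y : D.T j) (z : D.T k) :
    binom D ((i + j) + k) k (mul (binom D (i + j) j (mul x y)) z)
      = castT D (show i + (j + k) = (i + j) + k by omega)
          (binom D (i + (j + k)) (j + k) (mul x (binom D (j + k) k (mul y z)))) := by
  have h' : i + (j + k) = (i + j) + k := by omega
  rw [← hpadR_mul (D.binom (i+j) j) (mul x y) z,
      ← hpadL_mul (D.binom (j+k) k) x (mul y z),
      hmul_assoc x y z, D.castT_binom_app, ce_ce]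
  exact DFunLike.congr_fun (D.key hbraid ((i+j)+k) i j k rfl (by omega)) _
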